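/- Let P = (x, α√3) with 0 < x < 1/2 and (1+x)/3 < α < 1 - x. Then the three points L₀ = (-x, √3(x²-1)/(3α)), L₊ = (2 + x, √3(1-x²)/(3α)), and L₋ = (-2 + x, √3(1-x²)/(3α)) are all at the same Euclidean distance from P. -/

import Mathlib

open RealInnerProductSpace

theorem dist_toLp_two (a b c d : ℝ) :
    dist !₂[a, b] !₂[c, d] = √((a - c) ^ 2 + (b - d) ^ 2) := by
  simp [EuclideanSpace.dist_eq, Fin.sum_univ_two, Real.dist_eq, sq_abs]

theorem stmt_9_general (x α : ℝ) (hx0 : 0 < x)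
    (hα0 : (1 + x)/3 < α) :
    let P : EuclideanSpace ℝ (Fin 2) := !₂[x, α * Real.sqrt 3]
    let L₀ : EuclideanSpace ℝ (Fin 2) := !₂[-x, Real.sqrt 3 * ((x^2 - 1) / (3 * α))]
    let Lplus : EuclideanSpace ℝ (Fin 2) := !₂[2 + x, Real.sqrt 3 * ((1 - x^2) / (3 * α))]
    let Lminus : EuclideanSpace ℝ (Fin 2) := !₂[-2 + x, Real.sqrt 3 * ((1 - x^2) / (3 * α))]
    dist P L₀ = dist P Lplus ∧ dist P L₀ = dist P Lminus := by
  intro P L₀ Lplus Lminus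
  have hα : α ≠ 0 := by linarith
  -- With h = α√3 and k = √3(1 - x²)/(3α), the squared distances are (2x)² + (h + k)² and
  -- 2² + (h - k)²; they differ by 4(x² - 1 + hk), which vanishes by this identity.
  have hheight : α * √3 * (√3 * ((1 - x ^ 2) / (3 * α))) = 1 - x ^ 2 := by
    field_simp
    rw [Real.sq_sqrt zero_le_three]
    ring
  simp only [P, L₀, Lplus, Lminus, dist_toLp_two]
  constructor <;> congr 1 <;> linear_combination 4 * hheight

theorem stmt_9 (x α : ℝ) (hx0 : 0 < x) (hx : x < 1/2)
    (hα0 : (1 + x)/3 < α) (hα1 : α < 1 - x) :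
    let P : EuclideanSpace ℝ (Fin 2) := !₂[x, α * Real.sqrt 3]
    let L₀ : EuclideanSpace ℝ (Fin 2) := !₂[-x, Real.sqrt 3 * ((x^2 - 1) / (3 * α))]
    let Lplus : EuclideanSpace ℝ (Fin 2) := !₂[2 + x, Real.sqrt 3 * ((1 - x^2) / (3 * α))]
    let Lminus : EuclideanSpace ℝ (Fin 2) := !₂[-2 + x, Real.sqrt 3 * ((1 - x^2) / (3 * α))]
    dist P L₀ = dist P Lplus ∧ dist P L₀ = dist P Lminus :=
  stmt_9_general x α hx0 hα0
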